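/- Let Σ be an all-orthogonal tensor and let P⁽ⁿ⁾ be unitary block-diagonal matrices whose blocks correspond exactly to groups of identical mode-n singular values of Σ. Then Σ' = (⊗ₙ P⁽ⁿ⁾†)Σ is again all-orthogonal with the same ordered mode-n singular values for every n. -/

import Mathlib

/-! The mode-`n` unfolding of `(⊗ₘ Uₘ) T` is `Uₙ · T₍ₙ₎ · Kᵀ`, where `K` is the Kronecker product
of the remaining factors. `K` is unitary, so the mode-`n` Gram matrix `T₍ₙ₎ T₍ₙ₎ᴴ` is merely
conjugated by `Uₙ`. All-orthogonality says this Gram matrix is `diag(σ²)`, and a unitary that is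
block-diagonal along the groups of equal singular values commutes with `diag(σ²)`, so the
conjugation leaves it unchanged. -/

open Matrix BigOperators

noncomputable section

/-- The full Kronecker (tensor) product `⊗ₙ U⁽ⁿ⁾` of the local matrices, as a matrix
on the product index set. -/
def kronFull {N : ℕ} {I : Fin N → ℕ} (U : ∀ n, Matrix (Fin (I n)) (Fin (I n)) ℂ) :
    Matrix (∀ n, Fin (I n)) (∀ n, Fin (I n)) ℂ :=
  Matrix.of fun x y => ∏ n, U n (x n) (y n)

/-- The action of a local operator `⊗ₙ U⁽ⁿ⁾` on a tensor `T ∈ ℂ^{I₁}⊗⋯⊗ℂ^{I_N}`. -/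
def locAct {N : ℕ} {I : Fin N → ℕ} (U : ∀ n, Matrix (Fin (I n)) (Fin (I n)) ℂ)
    (T : (∀ n, Fin (I n)) → ℂ) : (∀ n, Fin (I n)) → ℂ :=
  fun x => ∑ y : ∀ n, Fin (I n), (∏ n, U n (x n) (y n)) * T y

/-- Assemble a full multi-index from the value `i` of the `n`-th index and the values
`c` of the remaining indices. -/
def assemble {N : ℕ} {I : Fin N → ℕ} (n : Fin N) (i : Fin (I n))
    (c : ∀ k : {k : Fin N // k ≠ n}, Fin (I k.1)) : ∀ m, Fin (I m) :=
  fun m => if h : m = n then cast (show Fin (I n) = Fin (I m) by rw [h]) i else c ⟨m, h⟩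

/-- The mode-`n` matrix unfolding of a tensor (columns indexed by the remaining indices). -/
def unfold {N : ℕ} {I : Fin N → ℕ} (n : Fin N) (T : (∀ m, Fin (I m)) → ℂ) :
    Matrix (Fin (I n)) (∀ k : {k : Fin N // k ≠ n}, Fin (I k.1)) ℂ :=
  Matrix.of fun i c => T (assemble n i c)

/-- The Hermitian inner product `⟨T_{i_n=i}, T'_{i_n=j}⟩` of mode-`n` slices. -/
def modeInner {N : ℕ} {I : Fin N → ℕ} (n : Fin N) (T T' : (∀ m, Fin (I m)) → ℂ)
    (i j : Fin (I n)) : ℂ :=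
  ∑ c : ∀ k : {k : Fin N // k ≠ n}, Fin (I k.1),
    star (T (assemble n i c)) * T' (assemble n j c)

/-- `T` is all-orthogonal with ordered mode-`n` singular values `σ n`. -/
def AllOrth {N : ℕ} {I : Fin N → ℕ} (σ : ∀ n, Fin (I n) → ℝ)
    (T : (∀ m, Fin (I m)) → ℂ) : Prop :=
  (∀ n, Antitone (σ n)) ∧ (∀ n i, 0 ≤ σ n i) ∧
    ∀ n i j, modeInner n T T i j = if i = j then ((σ n i : ℂ)) ^ 2 else 0

/-- Squared Frobenius norm of a tensor. -/
def fnormSq {N : ℕ} {I : Fin N → ℕ} (T : (∀ m, Fin (I m)) → ℂ) : ℝ :=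
  ∑ x, Complex.normSq (T x)

namespace Matrix

variable {ι R : Type*} [Fintype ι]

def piKronecker [CommSemiring R] {α β : ι → Type*} (U : ∀ k, Matrix (α k) (β k) R) :
    Matrix (∀ k, α k) (∀ k, β k) R :=
  of fun x y => ∏ k, U k (x k) (y k)

theorem piKronecker_mul [CommSemiring R] [DecidableEq ι] {α κ β : ι → Type*}
    [∀ k, Fintype (κ k)] (U : ∀ k, Matrix (α k) (κ k) R) (V : ∀ k, Matrix (κ k) (β k) R) :
    piKronecker U * piKronecker V = piKronecker fun k => U k * V k := by
  ext x y
  simp only [piKronecker, mul_apply, of_apply, Fintype.prod_sum, Finset.prod_mul_distrib]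

theorem piKronecker_one [CommSemiring R] {κ : ι → Type*} [∀ k, DecidableEq (κ k)] :
    piKronecker (fun k => (1 : Matrix (κ k) (κ k) R)) = 1 := by
  ext x y
  simp only [piKronecker, of_apply, one_apply, Fintype.prod_boole, funext_iff]

theorem conjTranspose_piKronecker [CommSemiring R] [StarRing R] {α β : ι → Type*}
    (U : ∀ k, Matrix (α k) (β k) R) :
    (piKronecker U)ᴴ = piKronecker fun k => (U k)ᴴ := by
  ext x y
  simp only [piKronecker, conjTranspose_apply, of_apply, star_prod]

theorem piKronecker_mem_unitaryGroup [CommRing R] [StarRing R] [DecidableEq ι] {κ : ι → Type*}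
    [∀ k, Fintype (κ k)] [∀ k, DecidableEq (κ k)]
    {U : ∀ k, Matrix (κ k) (κ k) R} (hU : ∀ k, U k ∈ unitaryGroup (κ k) R) :
    piKronecker U ∈ unitaryGroup (∀ k, κ k) R := by
  rw [mem_unitaryGroup_iff, star_eq_conjTranspose, conjTranspose_piKronecker, piKronecker_mul]
  simp_rw [← star_eq_conjTranspose, mem_unitaryGroup_iff.mp (hU _)]
  exact piKronecker_one

theorem commute_diagonal_of_apply_eq_zero [CommSemiring R] [DecidableEq ι]
    {d : ι → R} {P : Matrix ι ι R} (hP : ∀ i j, d i ≠ d j → P i j = 0) :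
    Commute (diagonal d) P := by
  ext i j
  rw [diagonal_mul, mul_diagonal]
  by_cases h : d i = d j
  · rw [h, mul_comm]
  · rw [hP i j h, mul_zero, zero_mul]

end Matrix

section ModeUnfolding

variable {N : ℕ} {I : Fin N → ℕ}

theorem assemble_eq_piSplitAt_symm (n : Fin N) (i : Fin (I n))
    (c : ∀ k : {k : Fin N // k ≠ n}, Fin (I k.1)) :
    assemble n i c = (Equiv.piSplitAt n fun m => Fin (I m)).symm (i, c) := by
  funext m
  by_cases h : m = n
  · subst h
    simp [assemble]
  · simp [assemble, h]

theorem sum_eq_sum_assemble {M : Type*} [AddCommMonoid M] (n : Fin N) (f : (∀ m, Fin (I m)) → M) :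
    ∑ y, f y = ∑ a : Fin (I n), ∑ c : ∀ k : {k : Fin N // k ≠ n}, Fin (I k.1),
      f (assemble n a c) := by
  simp only [assemble_eq_piSplitAt_symm, ← Fintype.sum_prod_type', Equiv.sum_comp]

theorem prod_assemble {M : Type*} [CommMonoid M] (n : Fin N) (g : ∀ m, Fin (I m) → Fin (I m) → M)
    (i a : Fin (I n)) (c d : ∀ k : {k : Fin N // k ≠ n}, Fin (I k.1)) :
    ∏ m, g m (assemble n i c m) (assemble n a d m) = g n i a * ∏ k, g k.1 (c k) (d k) := by
  rw [Fintype.prod_eq_mul_prod_subtype_ne _ n]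
  simp [assemble, fun k : {k : Fin N // k ≠ n} => k.2]

theorem unfold_locAct (n : Fin N) (U : ∀ m, Matrix (Fin (I m)) (Fin (I m)) ℂ)
    (T : (∀ m, Fin (I m)) → ℂ) :
    unfold n (locAct U T) =
      U n * unfold n T * (piKronecker fun k : {k : Fin N // k ≠ n} => U k.1)ᵀ := by
  ext i c
  simp only [unfold, locAct, of_apply, mul_apply, transpose_apply, piKronecker,
    sum_eq_sum_assemble n, Finset.sum_mul]
  rw [Finset.sum_comm]
  refine Finset.sum_congr rfl fun d _ => Finset.sum_congr rfl fun a _ => ?_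
  rw [prod_assemble n (fun m => U m)]
  ring

theorem modeInner_self_eq_ite_iff (n : Fin N) (T : (∀ m, Fin (I m)) → ℂ) (d : Fin (I n) → ℂ) :
    (∀ i j, modeInner n T T i j = if i = j then d i else 0) ↔
      unfold n T * (unfold n T)ᴴ = diagonal d := by
  have hgram : ∀ i j, modeInner n T T i j = (unfold n T * (unfold n T)ᴴ) j i := fun i j => by
    simp only [modeInner, unfold, mul_apply, conjTranspose_apply, of_apply, mul_comm]
  rw [← ext_iff, forall_comm]
  simp only [hgram, diagonal_apply]
  refine forall_congr' fun i => forall_congr' fun j => ?_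
  by_cases h : i = j
  · subst h; rfl
  · rw [if_neg h, if_neg (Ne.symm h)]

theorem unfold_locAct_mul_conjTranspose (n : Fin N) {U : ∀ m, Matrix (Fin (I m)) (Fin (I m)) ℂ}
    (hU : ∀ k, k ≠ n → U k ∈ unitaryGroup (Fin (I k)) ℂ) (T : (∀ m, Fin (I m)) → ℂ) :
    unfold n (locAct U T) * (unfold n (locAct U T))ᴴ =
      U n * (unfold n T * (unfold n T)ᴴ) * (U n)ᴴ := by
  have hK : (piKronecker fun k : {k : Fin N // k ≠ n} => U k.1)ᵀ ∈ unitaryGroup _ ℂ :=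
    transpose_mem_unitaryGroup_iff.mpr (piKronecker_mem_unitaryGroup fun k => hU k.1 k.2)
  rw [unfold_locAct]
  simp only [conjTranspose_mul, Matrix.mul_assoc]
  rw [← Matrix.mul_assoc _ (_)ᴴ, ← star_eq_conjTranspose, mem_unitaryGroup_iff.mp hK,
    Matrix.one_mul]

end ModeUnfolding

/-- If `Σ` is all-orthogonal and `P⁽ⁿ⁾` are unitaries that are block-diagonal
compatibly with the multiplicities of the mode-`n` singular values (`P⁽ⁿ⁾_{ij} = 0` whenever
`σᵢ⁽ⁿ⁾ ≠ σⱼ⁽ⁿ⁾`), then `Σ' = (⊗ₙ P⁽ⁿ⁾†)Σ` is again all-orthogonal with the same ordered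
mode-`n` singular values. -/
theorem stmt9 {N : ℕ} {I : Fin N → ℕ} (T : (∀ n, Fin (I n)) → ℂ)
    (σ : ∀ n, Fin (I n) → ℝ) (hσ : AllOrth σ T)
    (P : ∀ n, Matrix (Fin (I n)) (Fin (I n)) ℂ)
    (hP : ∀ n, P n ∈ Matrix.unitaryGroup (Fin (I n)) ℂ)
    (hblock : ∀ (n : Fin N) (i j : Fin (I n)), σ n i ≠ σ n j → P n i j = 0) :
    AllOrth σ (locAct (fun n => (P n)ᴴ) T) := by
  obtain ⟨hanti, hnonneg, horth⟩ := hσ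
  refine ⟨hanti, hnonneg, fun n => ?_⟩
  have hgram := (modeInner_self_eq_ite_iff n T _).mp (horth n)
  have hcomm : Commute (diagonal fun i => (σ n i : ℂ) ^ 2) (P n) :=
    commute_diagonal_of_apply_eq_zero fun i j h => hblock n i j fun h' => h (by rw [h'])
  have hPstar : ∀ k, (P k)ᴴ ∈ unitaryGroup (Fin (I k)) ℂ := fun k =>
    star_eq_conjTranspose (P k) ▸ Unitary.star_mem (hP k)
  rw [modeInner_self_eq_ite_iff, unfold_locAct_mul_conjTranspose n (fun k _ => hPstar k), hgram,
    conjTranspose_conjTranspose, Matrix.mul_assoc, hcomm.eq, ← Matrix.mul_assoc,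
    ← star_eq_conjTranspose, mem_unitaryGroup_iff'.mp (hP n), Matrix.one_mul]
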